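/- arXiv:2507.05074 — 5 statements merged into one kernel-verified Lean document; each statement's English description precedes it below -/
import Mathlib

section
/- Let r ∈ (0,1/2), let a,b,c,d ∈ ℝ, and set λ = a+b+c−4d+3. If λ ≠ 0, then the integral D_r(a,b,c,d) = ∫_{A_r} x₁^a x₂^b x₃^c Δ(x₁,x₂,x₃)^{−d} dx₁ dx₂ dx₃ satisfies D_r(a,b,c,d) = (1/λ) ∫_{Ω_r} u^a v^b Q(u,v)^{−d} (1 − (r/u)^λ) du dv, as an identity of Lebesgue integrals of nonnegative functions with values in [0,∞]. -/
open MeasureTheory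

/-- `Δ(x₁,x₂,x₃) = (x₁+x₂+x₃)(x₁+x₂−x₃)(x₁−x₂+x₃)(−x₁+x₂+x₃)`. -/
noncomputable def Delta (x₁ x₂ x₃ : ℝ) : ℝ :=
  (x₁ + x₂ + x₃) * (x₁ + x₂ - x₃) * (x₁ - x₂ + x₃) * (-x₁ + x₂ + x₃)

/-- The region `A_r` of ordered triangle-admissible triples. -/
def regionA (r : ℝ) : Set (ℝ × ℝ × ℝ) :=
  {p | r ≤ p.1 ∧ p.1 < p.2.1 ∧ p.2.1 < p.2.2 ∧ p.2.2 ≤ 1 ∧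
    p.2.1 - p.1 ≤ p.2.2 ∧ p.2.2 ≤ p.1 + p.2.1}

/-- `Q(u,v) = Δ(u,v,1)`. -/
noncomputable def Qfun (u v : ℝ) : ℝ := Delta u v 1

/-- The shape domain `Ω_r`. -/
def regionOmega (r : ℝ) : Set (ℝ × ℝ) :=
  {p | r < p.1 ∧ p.1 < 1 / 2 ∧ 1 - p.1 < p.2 ∧ p.2 < 1} ∪
  {p | 1 / 2 < p.1 ∧ p.1 < 1 ∧ p.1 < p.2 ∧ p.2 < 1}

/-!
Write a point of `A_r` as `(t u, t v, t)`, with `t = x₃` the scale and `(u, v)` the shape.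
The Jacobian is `t²` and `Δ` is homogeneous of degree 4, so the integrand becomes
`t^(λ-1) u^a v^b Q(u,v)^(-d)`. The shape ranges over the triangle `u < v < 1 ≤ u + v` and the
scale over `[r/u, 1]`, where `t^(λ-1)` integrates to `(1 - (r/u)^λ)/λ`; up to null lines, the
shapes with `u > r` form `Ω_r`.
-/

open scoped ENNReal
open Set Module

section Cone

variable {E : Type*} [NormedAddCommGroup E] [NormedSpace ℝ E] [MeasurableSpace E] [BorelSpace E]
  [FiniteDimensional ℝ E] (μ : Measure E) [μ.IsAddHaarMeasure]

theorem lintegral_comp_smul {f : E → ℝ≥0∞} (hf : Measurable f) {R : ℝ} (hR : R ≠ 0) :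
    ∫⁻ x, f (R • x) ∂μ = ENNReal.ofReal |(R ^ finrank ℝ E)⁻¹| * ∫⁻ x, f x ∂μ := by
  rw [← lintegral_map hf (measurable_const_smul R), Measure.map_addHaar_smul μ hR,
    lintegral_smul_measure, smul_eq_mul]

theorem lintegral_prod_eq_lintegral_cone {F : E × ℝ → ℝ≥0∞} (hF : Measurable F) :
    ∫⁻ z, F z ∂μ.prod volume =
      ∫⁻ x, (∫⁻ t : ℝ, ENNReal.ofReal (|t| ^ finrank ℝ E) * F (t • x, t)) ∂μ := by
  have hFt (t : ℝ) : Measurable fun x : E => F (x, t) := by fun_prop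
  rw [lintegral_prod_symm' F hF]
  conv_rhs => rw [lintegral_lintegral_swap (by fun_prop)]
  refine lintegral_congr_ae (((volume : Measure ℝ).ae_ne 0).mono fun t ht => ?_)
  dsimp only
  rw [lintegral_const_mul _ (by fun_prop), lintegral_comp_smul μ (hFt t) ht, ← mul_assoc,
    ← ENNReal.ofReal_mul (by positivity), abs_inv, abs_pow, mul_inv_cancel₀ (by positivity),
    ENNReal.ofReal_one, one_mul]

end Cone

theorem rpow_sub_rpow_div_nonpos {b s l : ℝ} (hb : 0 < b) (hbs : b ≤ s) :
    (b ^ l - s ^ l) / l ≤ 0 := by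
  rcases lt_or_ge l 0 with hl | hl
  · exact div_nonpos_of_nonneg_of_nonpos
      (sub_nonneg.2 (Real.rpow_le_rpow_of_nonpos hb hbs hl.le)) hl.le
  · exact div_nonpos_of_nonpos_of_nonneg
      (sub_nonpos.2 (Real.rpow_le_rpow hb.le hbs hl)) hl

theorem lintegral_Icc_rpow_sub_one {s b l : ℝ} (hs : 0 < s) (hb : 0 < b) (hl : l ≠ 0) :
    ∫⁻ t in Icc s b, ENNReal.ofReal (t ^ (l - 1)) = ENNReal.ofReal ((b ^ l - s ^ l) / l) := by
  rcases le_or_gt s b with hsb | hbs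
  · have hcont : ContinuousOn (fun t : ℝ => t ^ (l - 1)) (Icc s b) :=
      continuousOn_id.rpow_const fun t ht => Or.inl (hs.trans_le ht.1).ne'
    have hnonneg : 0 ≤ᵐ[volume.restrict (Icc s b)] fun t : ℝ => t ^ (l - 1) :=
      (ae_restrict_iff' measurableSet_Icc).2
        (ae_of_all _ fun t ht => Real.rpow_nonneg (hs.trans_le ht.1).le _)
    rw [← ofReal_integral_eq_lintegral_ofReal hcont.integrableOn_Icc hnonneg,
      integral_Icc_eq_integral_Ioc, ← intervalIntegral.integral_of_le hsb,
      integral_rpow (Or.inr ⟨by simpa [sub_eq_iff_eq_add] using hl, notMem_uIcc_of_lt hs hb⟩),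
      sub_add_cancel]
  · rw [Icc_eq_empty (not_le.2 hbs), Measure.restrict_empty, lintegral_zero_measure,
      ENNReal.ofReal_of_nonpos (rpow_sub_rpow_div_nonpos hb hbs.le)]

def normalizedShapes : Set (ℝ × ℝ) := {q | q.1 < q.2 ∧ q.2 < 1 ∧ 1 ≤ q.1 + q.2}

noncomputable def edgeIntegrand (a b c d : ℝ) (p : ℝ × ℝ × ℝ) : ℝ :=
  p.1 ^ a * p.2.1 ^ b * p.2.2 ^ c * Delta p.1 p.2.1 p.2.2 ^ (-d)

noncomputable def shapeIntegrand (a b d : ℝ) (q : ℝ × ℝ) : ℝ :=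
  q.1 ^ a * q.2 ^ b * Qfun q.1 q.2 ^ (-d)

theorem measurableSet_regionA (r : ℝ) : MeasurableSet (regionA r) := by
  unfold regionA; measurability

theorem measurableSet_regionOmega (r : ℝ) : MeasurableSet (regionOmega r) := by
  unfold regionOmega; measurability

theorem measurable_edgeIntegrand (a b c d : ℝ) : Measurable (edgeIntegrand a b c d) := by
  unfold edgeIntegrand Delta; fun_prop

theorem Delta_mul_mul_eq_pow_mul_Qfun (t u v : ℝ) :
    Delta (t * u) (t * v) t = t ^ 4 * Qfun u v := by
  unfold Qfun Delta; ring

theorem Qfun_nonneg {q : ℝ × ℝ} (hq : q ∈ normalizedShapes) : 0 ≤ Qfun q.1 q.2 := by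
  obtain ⟨huv, hv, hsum⟩ := hq
  unfold Qfun Delta
  have : 0 ≤ q.1 - q.2 + 1 := by linarith
  have : 0 ≤ -q.1 + q.2 + 1 := by linarith
  have : 0 ≤ q.1 + q.2 - 1 := by linarith
  have : 0 ≤ q.1 + q.2 + 1 := by linarith
  positivity

theorem fst_pos_of_mem_normalizedShapes {q : ℝ × ℝ} (hq : q ∈ normalizedShapes) : 0 < q.1 := by
  obtain ⟨huv, hv, hsum⟩ := hq
  linarith

theorem mem_regionA_cone_iff {r t u v : ℝ} (hr : 0 < r) :
    (t * u, t * v, t) ∈ regionA r ↔ (u, v) ∈ normalizedShapes ∧ t ∈ Icc (r / u) 1 := by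
  simp only [regionA, normalizedShapes, mem_ofPred_eq, mem_Icc]
  constructor
  · rintro ⟨hru, huv, hv, ht1, -, hsum⟩
    have ht : 0 < t := by linarith
    have hu : 0 < u := pos_of_mul_pos_right (hr.trans_le hru) ht.le
    refine ⟨⟨?_, ?_, ?_⟩, (div_le_iff₀ hu).2 (by linarith), ht1⟩ <;> nlinarith
  · rintro ⟨⟨huv, hv, hsum⟩, hrt, ht1⟩
    have hu : 0 < u := by linarith
    rw [div_le_iff₀ hu] at hrt
    refine ⟨by linarith, ?_, ?_, ht1, ?_, ?_⟩ <;> nlinarith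

theorem sq_mul_edgeIntegrand_cone {a b c d t : ℝ} (ht : 0 < t) {q : ℝ × ℝ}
    (hq : q ∈ normalizedShapes) :
    t ^ 2 * edgeIntegrand a b c d (t * q.1, t * q.2, t) =
      t ^ (a + b + c - 4 * d + 3 - 1) * shapeIntegrand a b d q := by
  have hu := fst_pos_of_mem_normalizedShapes hq
  have hv : 0 < q.2 := hu.trans hq.1
  have hQ := Qfun_nonneg hq
  simp only [edgeIntegrand, shapeIntegrand, Delta_mul_mul_eq_pow_mul_Qfun]
  rw [Real.mul_rpow ht.le hu.le, Real.mul_rpow ht.le hv.le, Real.mul_rpow (by positivity) hQ,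
    ← Real.rpow_natCast_mul ht.le,
    show a + b + c - 4 * d + 3 - 1 = 2 + a + b + c + (4 : ℕ) * -d by push_cast; ring,
    Real.rpow_add ht, Real.rpow_add ht, Real.rpow_add ht, Real.rpow_add ht,
    show (2 : ℝ) = (2 : ℕ) by norm_num, Real.rpow_natCast]
  ring

theorem shapeIntegrand_nonneg (a b d : ℝ) {q : ℝ × ℝ} (hq : q ∈ normalizedShapes) :
    0 ≤ shapeIntegrand a b d q := by
  have hu := fst_pos_of_mem_normalizedShapes hq
  have hv : 0 < q.2 := hu.trans hq.1
  have hQ := Qfun_nonneg hq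
  unfold shapeIntegrand
  positivity

theorem lintegral_cone_edgeIntegrand {r : ℝ} (hr : 0 < r) (a b c d : ℝ) (q : ℝ × ℝ) :
    ∫⁻ t : ℝ, ENNReal.ofReal (|t| ^ 2) *
        (regionA r).indicator (fun p => ENNReal.ofReal (edgeIntegrand a b c d p))
          (t * q.1, t * q.2, t) =
      normalizedShapes.indicator (fun q => ∫⁻ t in Icc (r / q.1) 1,
        ENNReal.ofReal (t ^ (a + b + c - 4 * d + 3 - 1) * shapeIntegrand a b d q)) q := by
  by_cases hq : q ∈ normalizedShapes
  · rw [indicator_of_mem hq, ← lintegral_indicator measurableSet_Icc]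
    refine lintegral_congr fun t => ?_
    by_cases ht : t ∈ Icc (r / q.1) 1
    · have ht0 : 0 < t := (div_pos hr (fst_pos_of_mem_normalizedShapes hq)).trans_le ht.1
      rw [indicator_of_mem ((mem_regionA_cone_iff hr).2 ⟨hq, ht⟩), indicator_of_mem ht,
        ← ENNReal.ofReal_mul (by positivity), abs_of_pos ht0, sq_mul_edgeIntegrand_cone ht0 hq]
    · rw [indicator_of_notMem (fun h => ht ((mem_regionA_cone_iff hr).1 h).2),
        indicator_of_notMem ht, mul_zero]
  · have hA (t : ℝ) : (t * q.1, t * q.2, t) ∉ regionA r :=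
      fun h => hq ((mem_regionA_cone_iff hr).1 h).1
    simp [hq, hA]

theorem lintegral_Icc_rpow_sub_one_mul {s l g : ℝ} (hs : 0 < s) (hl : l ≠ 0) (hg : 0 ≤ g) :
    ∫⁻ t in Icc s 1, ENNReal.ofReal (t ^ (l - 1) * g) =
      ENNReal.ofReal (l⁻¹ * (g * (1 - s ^ l))) := by
  simp_rw [ENNReal.ofReal_mul' hg]
  rw [lintegral_mul_const' _ _ ENNReal.ofReal_ne_top, lintegral_Icc_rpow_sub_one hs one_pos hl,
    ← ENNReal.ofReal_mul' hg, Real.one_rpow]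
  congr 1
  ring

theorem ae_mem_regionOmega_iff {r : ℝ} (hr : r < 1 / 2) :
    ∀ᵐ q : ℝ × ℝ, q ∈ regionOmega r ↔ q ∈ normalizedShapes ∧ r < q.1 := by
  have h_half : ∀ᵐ q : ℝ × ℝ, q.1 ≠ 1 / 2 :=
    Measure.quasiMeasurePreserving_fst.ae ((volume : Measure ℝ).ae_ne _)
  have h_sum : ∀ᵐ q : ℝ × ℝ, q.1 + q.2 ≠ 1 := by
    rw [Measure.volume_eq_prod, Measure.ae_prod_iff_ae_ae (by measurability)]
    refine ae_of_all _ fun u => ((volume : Measure ℝ).ae_ne (1 - u)).mono fun v hv => ?_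
    contrapose! hv
    linarith
  filter_upwards [h_half, h_sum] with q hq_half hq_sum
  simp only [regionOmega, normalizedShapes, mem_union, mem_ofPred_eq]
  constructor
  · rintro (⟨h1, h2, h3, h4⟩ | ⟨h1, h2, h3, h4⟩)
    · exact ⟨⟨by linarith, h4, by linarith⟩, h1⟩
    · exact ⟨⟨h3, h4, by linarith⟩, by linarith⟩
  · rintro ⟨⟨huv, hv, hsum⟩, hru⟩
    rcases hq_half.lt_or_gt with hu | hu
    · exact Or.inl ⟨hru, hu, by contrapose! hq_sum; linarith, hv⟩
    · exact Or.inr ⟨hu, huv.trans hv, huv, hv⟩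

theorem lintegral_normalizedShapes_eq_setLIntegral_regionOmega {r l : ℝ}
    (hr : r ∈ Ioo (0 : ℝ) (1 / 2)) (hl : l ≠ 0) {g : ℝ × ℝ → ℝ}
    (hg : ∀ q ∈ normalizedShapes, 0 ≤ g q) :
    ∫⁻ q, normalizedShapes.indicator
        (fun q => ∫⁻ t in Icc (r / q.1) 1, ENNReal.ofReal (t ^ (l - 1) * g q)) q =
      ∫⁻ q in regionOmega r, ENNReal.ofReal (l⁻¹ * (g q * (1 - (r / q.1) ^ l))) := by
  rw [← lintegral_indicator (measurableSet_regionOmega r)]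
  refine lintegral_congr_ae ((ae_mem_regionOmega_iff hr.2).mono fun q hΩ => ?_)
  by_cases hq : q ∈ normalizedShapes
  · have hu := fst_pos_of_mem_normalizedShapes hq
    rw [indicator_of_mem hq]
    by_cases hru : r < q.1
    · rw [indicator_of_mem (hΩ.2 ⟨hq, hru⟩),
        lintegral_Icc_rpow_sub_one_mul (div_pos hr.1 hu) hl (hg q hq)]
    · have hnull : volume (Icc (r / q.1) 1) = 0 := by
        rw [Real.volume_Icc, ENNReal.ofReal_eq_zero, sub_nonpos, one_le_div hu]
        exact not_lt.1 hru
      rw [indicator_of_notMem (fun h => hru (hΩ.1 h).2), setLIntegral_measure_zero _ _ hnull]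
  · rw [indicator_of_notMem hq, indicator_of_notMem (fun h => hq (hΩ.1 h).1)]

theorem stmt_0 (r a b c d : ℝ) (hr : r ∈ Set.Ioo (0 : ℝ) (1 / 2))
    (hl : a + b + c - 4 * d + 3 ≠ 0) :
    ∫⁻ p in regionA r,
        ENNReal.ofReal (p.1 ^ a * p.2.1 ^ b * p.2.2 ^ c * Delta p.1 p.2.1 p.2.2 ^ (-d)) =
    ∫⁻ p in regionOmega r,
        ENNReal.ofReal ((a + b + c - 4 * d + 3)⁻¹ *
          (p.1 ^ a * p.2 ^ b * Qfun p.1 p.2 ^ (-d) *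
            (1 - (r / p.1) ^ (a + b + c - 4 * d + 3)))) := by
  set F : ℝ × ℝ × ℝ → ℝ≥0∞ :=
    (regionA r).indicator fun p => ENNReal.ofReal (edgeIntegrand a b c d p)
  have hF : Measurable F :=
    (measurable_edgeIntegrand a b c d).ennreal_ofReal.indicator (measurableSet_regionA r)
  calc _ = ∫⁻ p, F p := (lintegral_indicator (measurableSet_regionA r) _).symm
    _ = ∫⁻ z : (ℝ × ℝ) × ℝ, F (MeasurableEquiv.prodAssoc z) :=
      (volume_preserving_prodAssoc.lintegral_comp hF).symm
    _ = ∫⁻ q : ℝ × ℝ, ∫⁻ t : ℝ, ENNReal.ofReal (|t| ^ 2) * F (t * q.1, t * q.2, t) := by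
      rw [Measure.volume_eq_prod,
        lintegral_prod_eq_lintegral_cone volume (F := fun z => F (MeasurableEquiv.prodAssoc z))
          (by fun_prop)]
      simp only [Module.finrank_prod, Module.finrank_self]
      rfl
    _ = _ := by
      simp only [F, lintegral_cone_edgeIntegrand hr.1]
      exact lintegral_normalizedShapes_eq_setLIntegral_regionOmega hr hl
        fun q hq => shapeIntegrand_nonneg a b d hq
end

section
/- Let r ∈ (0,1/2), let a,b,c,d ∈ ℝ, and suppose λ = a+b+c−4d+3 = 0. Then the integral D_r(a,b,c,d) = ∫_{A_r} x₁^a x₂^b x₃^c Δ(x₁,x₂,x₃)^{−d} dx₁ dx₂ dx₃ satisfies D_r(a,b,c,d) = ∫_{Ω_r} u^a v^b Q(u,v)^{−d} log(u/r) du dv, as an identity of Lebesgue integrals of nonnegative functions with values in [0,∞]. -/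
open MeasureTheory

/-!
Write a triple of `A_r` in cone coordinates `(x₁, x₂, x₃) = t • (u, v, 1)` with `t = x₃`.
The Jacobian is `t²` and `Δ` is homogeneous of degree 4, so when `λ = 0` the integrand
becomes `t⁻¹ u^a v^b Q(u,v)^{-d}`. For a fixed shape `(u, v)` the scale ranges over
`[r/u, 1]`, and `∫_{r/u}^1 dt/t = log (u/r)`. The shapes that occur form the triangle
`1 ≤ u + v`, `u < v < 1`, which agrees with `Ω_r` up to the null lines `u = 1/2`,
`u + v = 1` and the part `u ≤ r`, where the logarithm is nonpositive.
-/

open Set Real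

-- Instance search does not find this for `ℝ × ℝ × ℝ` on its own.
instance isAddHaarMeasure_volume_prod {E F : Type*}
    [NormedAddCommGroup E] [NormedSpace ℝ E] [MeasureSpace E] [BorelSpace E]
    [FiniteDimensional ℝ E] [(volume : Measure E).IsAddHaarMeasure]
    [NormedAddCommGroup F] [NormedSpace ℝ F] [MeasureSpace F] [BorelSpace F]
    [FiniteDimensional ℝ F] [(volume : Measure F).IsAddHaarMeasure]
    [SigmaFinite (volume : Measure F)] :
    (volume : Measure (E × F)).IsAddHaarMeasure :=
  Measure.prod.instIsAddHaarMeasure _ _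

lemma Delta_mul_mul_mul (t x y z : ℝ) :
    Delta (t * x) (t * y) (t * z) = t ^ 4 * Delta x y z := by
  unfold Delta; ring

lemma Delta_nonneg {x y z : ℝ} (hz : z ≤ x + y) (hy : y ≤ x + z) (hx : x ≤ y + z) :
    0 ≤ Delta x y z := by
  unfold Delta
  have : 0 ≤ x + y + z := by linarith
  have : 0 ≤ x + y - z := by linarith
  have : 0 ≤ x - y + z := by linarith
  have : 0 ≤ -x + y + z := by linarith
  positivity

lemma rpow_mul_Delta_cone (a b c d : ℝ) {t u v : ℝ} (ht : 0 < t) (hu : 0 ≤ u) (hv : 0 ≤ v)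
    (hQ : 0 ≤ Qfun u v) :
    (t * u) ^ a * (t * v) ^ b * t ^ c * Delta (t * u) (t * v) t ^ (-d) =
      t ^ (a + b + c - 4 * d) * (u ^ a * v ^ b * Qfun u v ^ (-d)) := by
  have hD : Delta (t * u) (t * v) t = t ^ (4 : ℝ) * Qfun u v := by
    simpa [Qfun] using Delta_mul_mul_mul t u v 1
  rw [hD, mul_rpow ht.le hu, mul_rpow ht.le hv, mul_rpow (by positivity) hQ,
    ← rpow_mul ht.le, rpow_sub ht, rpow_add ht, rpow_add ht, mul_neg, rpow_neg ht.le]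
  field_simp

def coneMap (q : ℝ × ℝ × ℝ) : ℝ × ℝ × ℝ := (q.1 * q.2.1, q.1 * q.2.2, q.1)

noncomputable def coneMapDeriv (q : ℝ × ℝ × ℝ) : (ℝ × ℝ × ℝ) →L[ℝ] ℝ × ℝ × ℝ :=
  LinearMap.toContinuousLinearMap
    { toFun := fun s => (q.2.1 * s.1 + q.1 * s.2.1, q.2.2 * s.1 + q.1 * s.2.2, s.1)
      map_add' _ _ := by ext <;> simp <;> ring
      map_smul' _ _ := by ext <;> simp <;> ring }

lemma hasFDerivAt_coneMap (q : ℝ × ℝ × ℝ) : HasFDerivAt coneMap (coneMapDeriv q) q := by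
  have h1 := hasFDerivAt_fst (𝕜 := ℝ) (p := q)
  have h2 := (hasFDerivAt_snd (𝕜 := ℝ) (p := q)).fst
  have h3 := (hasFDerivAt_snd (𝕜 := ℝ) (p := q)).snd
  refine ((h1.mul h2).prodMk ((h1.mul h3).prodMk h1)).congr_fderiv ?_
  ext <;> simp [coneMapDeriv]

noncomputable def tripleEquivFun : (ℝ × ℝ × ℝ) ≃ₗ[ℝ] (Fin 3 → ℝ) where
  toFun p := ![p.1, p.2.1, p.2.2]
  invFun g := (g 0, g 1, g 2)
  map_add' p q := by funext i; fin_cases i <;> simp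
  map_smul' c p := by funext i; fin_cases i <;> simp
  left_inv p := by simp
  right_inv g := by funext i; fin_cases i <;> simp

lemma det_coneMapDeriv (q : ℝ × ℝ × ℝ) : (coneMapDeriv q).det = q.1 ^ 2 := by
  rw [ContinuousLinearMap.det,
    ← LinearMap.det_toMatrix (Module.Basis.ofEquivFun tripleEquivFun), Matrix.det_fin_three]
  simp [LinearMap.toMatrix_apply, coneMapDeriv, tripleEquivFun, Module.Basis.ofEquivFun, sq]

def shapeRegion : Set (ℝ × ℝ) := {w | 1 ≤ w.1 + w.2 ∧ w.1 < w.2 ∧ w.2 < 1}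

def coneRegion (r : ℝ) : Set (ℝ × ℝ × ℝ) :=
  {q | q.2 ∈ shapeRegion ∧ q.1 ∈ Icc (r / q.2.1) 1}

lemma measurableSet_shapeRegion : MeasurableSet shapeRegion := by
  unfold shapeRegion; simp only [ofPred_and]
  exact (measurableSet_le (by fun_prop) (by fun_prop)).inter
    ((measurableSet_lt (by fun_prop) (by fun_prop)).inter
      (measurableSet_lt (by fun_prop) (by fun_prop)))

lemma measurableSet_coneRegion (r : ℝ) : MeasurableSet (coneRegion r) := by
  unfold coneRegion; simp only [mem_Icc, ofPred_and]
  exact (measurableSet_shapeRegion.preimage measurable_snd).inter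
    ((measurableSet_le (by fun_prop) (by fun_prop)).inter
      (measurableSet_le (by fun_prop) (by fun_prop)))

lemma pos_of_mem_shapeRegion {w : ℝ × ℝ} (hw : w ∈ shapeRegion) : 0 < w.1 ∧ 0 < w.2 := by
  obtain ⟨h1, h2, h3⟩ := hw
  constructor <;> linarith

lemma Qfun_nonneg_of_mem_shapeRegion {w : ℝ × ℝ} (hw : w ∈ shapeRegion) :
    0 ≤ Qfun w.1 w.2 := by
  obtain ⟨h1, h2, h3⟩ := hw
  exact Delta_nonneg (by linarith) (by linarith) (by linarith)

lemma coneMap_image_coneRegion {r : ℝ} (hr : 0 < r) : coneMap '' coneRegion r = regionA r := by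
  ext p
  constructor
  · rintro ⟨⟨t, w⟩, ⟨hw, hrt, ht1⟩, rfl⟩
    obtain ⟨hu, hv⟩ := pos_of_mem_shapeRegion hw
    obtain ⟨h1, h2, h3⟩ := hw
    have ht : 0 < t := (div_pos hr hu).trans_le hrt
    rw [div_le_iff₀ hu] at hrt
    refine ⟨?_, ?_, ?_, ht1, ?_, ?_⟩ <;> simp only [coneMap] <;> nlinarith
  · rintro ⟨h1, h2, h3, h4, h5, h6⟩
    have h0 : 0 < p.2.2 := by linarith
    refine ⟨(p.2.2, p.1 / p.2.2, p.2.1 / p.2.2), ⟨⟨?_, ?_, ?_⟩, ?_, h4⟩, ?_⟩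
    · rw [← add_div, le_div_iff₀ h0]; linarith
    · exact div_lt_div_of_pos_right h2 h0
    · exact (div_lt_one h0).mpr h3
    · rw [div_div_eq_mul_div, div_le_iff₀ (by linarith)]; nlinarith
    · simp only [coneMap]; ext <;> field_simp

lemma injOn_coneMap_coneRegion {r : ℝ} (hr : 0 < r) : InjOn coneMap (coneRegion r) := by
  rintro ⟨t, u, v⟩ ⟨hw, hrt, -⟩ ⟨t', u', v'⟩ - h
  simp only [coneMap, Prod.mk.injEq] at h
  obtain ⟨hu, hv, rfl⟩ := h
  have ht : t ≠ 0 := ((div_pos hr (pos_of_mem_shapeRegion hw).1).trans_le hrt).ne'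
  rw [mul_left_cancel₀ ht hu, mul_left_cancel₀ ht hv]

lemma lintegral_regionA_eq_coneRegion {r a b c d : ℝ} (hr : 0 < r)
    (hl : a + b + c - 4 * d + 3 = 0) :
    ∫⁻ p in regionA r,
        ENNReal.ofReal (p.1 ^ a * p.2.1 ^ b * p.2.2 ^ c * Delta p.1 p.2.1 p.2.2 ^ (-d)) =
      ∫⁻ q in coneRegion r,
        ENNReal.ofReal (q.1⁻¹ * (q.2.1 ^ a * q.2.2 ^ b * Qfun q.2.1 q.2.2 ^ (-d))) := by
  rw [← coneMap_image_coneRegion hr,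
    lintegral_image_eq_lintegral_abs_det_fderiv_mul volume (measurableSet_coneRegion r)
      (fun q _ => (hasFDerivAt_coneMap q).hasFDerivWithinAt) (injOn_coneMap_coneRegion hr)]
  refine setLIntegral_congr_fun (measurableSet_coneRegion r) fun ⟨t, w⟩ ⟨hw, hrt, _⟩ => ?_
  obtain ⟨hu, hv⟩ := pos_of_mem_shapeRegion hw
  have ht : 0 < t := (div_pos hr hu).trans_le hrt
  have hexp : a + b + c - 4 * d = -3 := by linarith
  rw [det_coneMapDeriv, abs_of_nonneg (sq_nonneg t), ← ENNReal.ofReal_mul (sq_nonneg t)]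
  dsimp only [coneMap]
  rw [rpow_mul_Delta_cone a b c d ht hu.le hv.le (Qfun_nonneg_of_mem_shapeRegion hw), hexp,
    ← mul_assoc, ← rpow_natCast, ← rpow_add ht]
  norm_num [rpow_neg_one]

lemma lintegral_Icc_inv {x y : ℝ} (hx : 0 < x) (hy : 0 < y) :
    ∫⁻ t in Icc x y, ENNReal.ofReal t⁻¹ = ENNReal.ofReal (log (y / x)) := by
  rcases le_or_gt x y with hxy | hyx
  · have hint : IntegrableOn (fun t : ℝ => t⁻¹) (Icc x y) :=
      (continuousOn_inv₀.mono fun t ht => (hx.trans_le ht.1).ne').integrableOn_Icc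
    rw [← ofReal_integral_eq_lintegral_ofReal hint, integral_Icc_eq_integral_Ioc,
      ← intervalIntegral.integral_of_le hxy, integral_inv_of_pos hx hy]
    filter_upwards [ae_restrict_mem measurableSet_Icc] with t ht
    exact inv_nonneg.mpr (hx.le.trans ht.1)
  · rw [Icc_eq_empty hyx.not_ge, Measure.restrict_empty, lintegral_zero_measure, eq_comm,
      ENNReal.ofReal_eq_zero]
    exact log_nonpos (div_pos hy hx).le ((div_le_one hx).mpr hyx.le)

lemma lintegral_coneRegion {r : ℝ} (hr : 0 < r) {g : ℝ × ℝ → ℝ} (hg : Measurable g)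
    (hg0 : ∀ w ∈ shapeRegion, 0 ≤ g w) :
    ∫⁻ q in coneRegion r, ENNReal.ofReal (q.1⁻¹ * g q.2) =
      ∫⁻ w in shapeRegion, ENNReal.ofReal (g w * log (w.1 / r)) := by
  have hF : Measurable fun q : ℝ × ℝ × ℝ => ENNReal.ofReal (q.1⁻¹ * g q.2) := by fun_prop
  rw [← lintegral_indicator (measurableSet_coneRegion r), Measure.volume_eq_prod,
    lintegral_prod_symm _ (hF.indicator (measurableSet_coneRegion r)).aemeasurable,
    ← lintegral_indicator measurableSet_shapeRegion]
  refine lintegral_congr fun w => ?_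
  by_cases hw : w ∈ shapeRegion
  · have hu := (pos_of_mem_shapeRegion hw).1
    have hslice :
        (fun t => (coneRegion r).indicator (fun q => ENNReal.ofReal (q.1⁻¹ * g q.2)) (t, w)) =
          (Icc (r / w.1) 1).indicator fun t => ENNReal.ofReal t⁻¹ * ENNReal.ofReal (g w) := by
      ext t
      by_cases ht : t ∈ Icc (r / w.1) 1
      · have ht0 : 0 ≤ t := (div_pos hr hu).le.trans ht.1
        rw [indicator_of_mem (show (t, w) ∈ coneRegion r from ⟨hw, ht⟩), indicator_of_mem ht,
          ENNReal.ofReal_mul (inv_nonneg.mpr ht0)]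
      · rw [indicator_of_notMem fun h : (t, w) ∈ coneRegion r => ht h.2, indicator_of_notMem ht]
    rw [indicator_of_mem hw, hslice, lintegral_indicator measurableSet_Icc,
      lintegral_mul_const _ measurable_inv.ennreal_ofReal,
      lintegral_Icc_inv (div_pos hr hu) one_pos, one_div_div, ← ENNReal.ofReal_mul' (hg0 w hw),
      mul_comm]
  · simp [indicator_of_notMem, hw, coneRegion]

lemma volume_setOf_fst_eq (c : ℝ) : volume {w : ℝ × ℝ | w.1 = c} = 0 := by
  have : {w : ℝ × ℝ | w.1 = c} = {c} ×ˢ univ := by ext w; simp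
  rw [this, Measure.volume_eq_prod, Measure.prod_prod, Real.volume_singleton, zero_mul]

lemma volume_setOf_fst_add_snd_eq (c : ℝ) : volume {w : ℝ × ℝ | w.1 + w.2 = c} = 0 := by
  rw [Measure.volume_eq_prod,
    Measure.measure_prod_null (measurableSet_eq_fun (by fun_prop) (by fun_prop))]
  refine ae_of_all _ fun x => ?_
  have : Prod.mk x ⁻¹' {w : ℝ × ℝ | w.1 + w.2 = c} = {c - x} := by
    ext y
    simp only [mem_preimage, mem_ofPred_eq, mem_singleton_iff]
    constructor <;> intro h <;> linarith
  simp [this]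

lemma shapeRegion_inter_ae_eq_regionOmega {r : ℝ} (hr : r ≤ 1 / 2) :
    (shapeRegion ∩ {w | r < w.1} : Set (ℝ × ℝ)) =ᵐ[volume] regionOmega r := by
  have hnull := measure_union_null (volume_setOf_fst_eq (1 / 2)) (volume_setOf_fst_add_snd_eq 1)
  filter_upwards [measure_eq_zero_iff_ae_notMem.mp hnull] with w hw
  simp only [mem_union, mem_ofPred_eq, not_or] at hw
  obtain ⟨hw2, hw1⟩ := hw
  apply propext
  constructor
  · rintro ⟨⟨h1, h2, h3⟩, hru⟩
    rcases lt_or_gt_of_ne hw2 with h | h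
    · exact Or.inl ⟨hru, h, by linarith [lt_of_le_of_ne h1 (Ne.symm hw1)], h3⟩
    · exact Or.inr ⟨h, by linarith, h2, h3⟩
  · rintro (⟨h1, h2, h3, h4⟩ | ⟨h1, h2, h3, h4⟩)
    · exact ⟨⟨by linarith, by linarith, h4⟩, h1⟩
    · exact ⟨⟨by linarith, h3, h4⟩, show r < w.1 by linarith⟩

lemma lintegral_shapeRegion_eq_regionOmega {r : ℝ} (hr : 0 < r) (hr2 : r ≤ 1 / 2)
    {g : ℝ × ℝ → ℝ} (hg0 : ∀ w ∈ shapeRegion, 0 ≤ g w) :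
    ∫⁻ w in shapeRegion, ENNReal.ofReal (g w * log (w.1 / r)) =
      ∫⁻ w in regionOmega r, ENNReal.ofReal (g w * log (w.1 / r)) := by
  have hB : MeasurableSet {w : ℝ × ℝ | r < w.1} :=
    measurableSet_lt measurable_const measurable_fst
  have hlow :
      ∫⁻ w in shapeRegion \ {w | r < w.1}, ENNReal.ofReal (g w * log (w.1 / r)) = 0 := by
    rw [← lintegral_zero]
    refine setLIntegral_congr_fun (measurableSet_shapeRegion.diff hB) fun w ⟨hw, hrw⟩ => ?_
    refine ENNReal.ofReal_eq_zero.mpr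
      (mul_nonpos_of_nonneg_of_nonpos (hg0 w hw) (log_nonpos ?_ ?_))
    · exact (div_pos (pos_of_mem_shapeRegion hw).1 hr).le
    · exact (div_le_one hr).mpr (not_lt.mp hrw)
  rw [← lintegral_inter_add_sdiff _ _ hB, hlow, add_zero,
    setLIntegral_congr (shapeRegion_inter_ae_eq_regionOmega hr2)]

theorem stmt_1 (r a b c d : ℝ) (hr : r ∈ Set.Ioo (0 : ℝ) (1 / 2))
    (hl : a + b + c - 4 * d + 3 = 0) :
    ∫⁻ p in regionA r,
        ENNReal.ofReal (p.1 ^ a * p.2.1 ^ b * p.2.2 ^ c * Delta p.1 p.2.1 p.2.2 ^ (-d)) =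
    ∫⁻ p in regionOmega r,
        ENNReal.ofReal (p.1 ^ a * p.2 ^ b * Qfun p.1 p.2 ^ (-d) *
            Real.log (p.1 / r)) := by
  obtain ⟨hr0, hr2⟩ := hr
  have hg0 : ∀ w ∈ shapeRegion, 0 ≤ w.1 ^ a * w.2 ^ b * Qfun w.1 w.2 ^ (-d) := by
    intro w hw
    obtain ⟨hu, hv⟩ := pos_of_mem_shapeRegion hw
    have := Qfun_nonneg_of_mem_shapeRegion hw
    positivity
  rw [lintegral_regionA_eq_coneRegion hr0 hl,
    lintegral_coneRegion hr0 (by unfold Qfun Delta; fun_prop) hg0,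
    lintegral_shapeRegion_eq_regionOmega hr0 hr2.le hg0]
end

section
/- Fix r ∈ (0,1/2). Let N_{L} denote the cardinality of the set Λ_{L,⌈rL⌉} = {(ℓ₁,ℓ₂,ℓ₃) ∈ ℕ³ : ⌈rL⌉ ≤ ℓ₁ < ℓ₂ < ℓ₃ ≤ L and ℓ₂−ℓ₁ ≤ ℓ₃ ≤ ℓ₁+ℓ₂}. Then lim_{L→∞} N_L / L³ = 1/12 − r²/2 + r³/2. -/
open Filter

/-- The set `Λ_{L,L₀}` of strictly ordered multipole triples between `L₀` and `L`
satisfying the triangle condition. -/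
def LambdaSet (L L₀ : ℕ) : Finset (ℕ × ℕ × ℕ) :=
  (Finset.Icc L₀ L ×ˢ Finset.Icc L₀ L ×ˢ Finset.Icc L₀ L).filter
    (fun p : ℕ × ℕ × ℕ => p.1 < p.2.1 ∧ p.2.1 < p.2.2 ∧
      p.2.1 - p.1 ≤ p.2.2 ∧ p.2.2 ≤ p.1 + p.2.1)

namespace Stmt9Aux

def G (n : ℕ) : ℕ := ∑ j ∈ Finset.range n, j

lemma Gmono : Monotone G := fun _ _ h => Finset.sum_le_sum_of_subset (Finset.range_subset_range.2 h)

lemma Greal (n : ℕ) : ((G n : ℕ) : ℝ) = n * (n - 1) / 2 := by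
  rcases n with _ | n
  · simp [G]
  · have h2 : ((∑ j ∈ Finset.range (n+1), j) * 2 : ℕ) = ((n+1) * n : ℕ) := by
      simpa using Finset.sum_range_id_mul_two (n + 1)
    have := congrArg (fun k : ℕ => (k : ℝ)) h2
    push_cast at this
    unfold G
    push_cast
    linarith

lemma cube (n : ℕ) : ∑ k ∈ Finset.range n, ((G k : ℕ) : ℝ) = n * (n - 1) * (n - 2) / 6 := by
  induction n with
  | zero => simp
  | succ n ih =>
    rw [Finset.sum_range_succ, ih, Greal]
    push_cast
    ring

lemma pairing : ∀ K : ℕ, ∀ M : ℕ, K ≤ 2 * M →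
    (∑ j ∈ Finset.range (K+1), G j) ≤ 2 * ∑ i ∈ Finset.range M, G (K - 2*i) ∧
    2 * (∑ i ∈ Finset.range M, G (K - 2*i)) ≤ (∑ j ∈ Finset.range (K+1), G j) + G (K+1) := by
  intro K
  induction K using Nat.strong_induction_on with
  | _ K ih =>
    match K with
    | 0 =>
      intro M _
      have h1 : ∑ i ∈ Finset.range M, G (0 - 2*i) = 0 := by
        apply Finset.sum_eq_zero
        intro i _
        have : 0 - 2*i = 0 := by omega
        rw [this]; simp [G]
      simp [h1, Finset.sum_range_succ, G]
    | 1 =>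
      intro M _
      have h1 : ∑ i ∈ Finset.range M, G (1 - 2*i) = 0 := by
        apply Finset.sum_eq_zero
        intro i _
        have h2 : 1 - 2*i = 0 ∨ 1 - 2*i = 1 := by omega
        rcases h2 with h2 | h2 <;> rw [h2] <;> simp [G]
      have hv : G 0 = 0 ∧ G 1 = 0 ∧ G 2 = 1 := by
        refine ⟨by simp [G], by simp [G], by simp [G, Finset.sum_range_succ]⟩
      simp only [h1, Finset.sum_range_succ, Finset.sum_range_zero]
      omega
    | (K'+2) =>
      intro M hM
      obtain ⟨M', rfl⟩ : ∃ M', M = M' + 1 := ⟨M - 1, by omega⟩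
      have hsplit : ∑ i ∈ Finset.range (M'+1), G (K' + 2 - 2*i)
          = (∑ i ∈ Finset.range M', G (K' - 2*i)) + G (K' + 2) := by
        rw [Finset.sum_range_succ']
        congr 1
        apply Finset.sum_congr rfl
        intro i _
        congr 1
        omega
      have ihK := ih K' (by omega) M' (by omega)
      have hC : ∑ j ∈ Finset.range (K'+2+1), G j
          = (∑ j ∈ Finset.range (K'+1), G j) + G (K'+1) + G (K'+2) := by
        rw [Finset.sum_range_succ, Finset.sum_range_succ]
      have hg1 : G (K'+1) ≤ G (K'+2) := Gmono (by omega)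
      have hg2 : G (K'+2) ≤ G (K'+2+1) := Gmono (by omega)
      constructor
      · rw [hsplit, hC]; omega
      · rw [hsplit, hC]; omega

lemma cardLambda (L m : ℕ) :
    (LambdaSet L m).card = ∑ a ∈ Finset.Icc m L, ∑ t ∈ Finset.Icc 1 a, (L - (a + t)) := by
  have h : (LambdaSet L m).card
      = ((Finset.Icc m L).sigma fun a => (Finset.Icc 1 a).sigma fun t =>
          Finset.Icc (a + t + 1) L).card := by
    apply Finset.card_bij' (fun p _ => (⟨p.1, p.2.2 - p.2.1, p.2.2⟩ : Σ _ : ℕ, Σ _ : ℕ, ℕ))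
      (fun q _ => ((q.1, q.2.2 - q.2.1, q.2.2) : ℕ × ℕ × ℕ))
    · intro p hp
      simp only [LambdaSet, Finset.mem_filter, Finset.mem_product, Finset.mem_Icc] at hp
      simp only [Finset.mem_sigma, Finset.mem_Icc]
      omega
    · intro q hq
      simp only [Finset.mem_sigma, Finset.mem_Icc] at hq
      simp only [LambdaSet, Finset.mem_filter, Finset.mem_product, Finset.mem_Icc]
      omega
    · intro p hp
      simp only [LambdaSet, Finset.mem_filter, Finset.mem_product, Finset.mem_Icc] at hp
      obtain ⟨a, b, c⟩ := p
      simp only at hp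
      have hb : c - (c - b) = b := by omega
      simp [hb]
    · intro q hq
      simp only [Finset.mem_sigma, Finset.mem_Icc] at hq
      obtain ⟨a, t, c⟩ := q
      simp only at hq
      have ht : c - (c - t) = t := by omega
      simp [ht]
  rw [h, Finset.card_sigma]
  apply Finset.sum_congr rfl
  intro a _
  rw [Finset.card_sigma]
  apply Finset.sum_congr rfl
  intro t _
  rw [Nat.card_Icc]
  omega

lemma innerSumG (L a : ℕ) :
    (∑ t ∈ Finset.Icc 1 a, (L - (a + t))) + G (L - 2*a) = G (L - a) := by
  have h1 : ∑ t ∈ Finset.Icc 1 a, (L - (a + t))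
      = ∑ t ∈ Finset.Icc 1 (min a (L - a)), (L - (a + t)) := by
    symm
    apply Finset.sum_subset
    · apply Finset.Icc_subset_Icc_right; omega
    · intro t ht hnt
      simp only [Finset.mem_Icc] at ht hnt
      omega
  have h2 : ∑ t ∈ Finset.Icc 1 (min a (L - a)), (L - (a + t))
      = ∑ j ∈ Finset.Ico (L - 2*a) (L - a), j := by
    apply Finset.sum_nbij' (i := fun t => L - a - t) (j := fun j => L - a - j)
    · intro t ht
      simp only [Finset.mem_Icc] at ht
      simp only [Finset.mem_Ico]
      omega
    · intro j hj
      simp only [Finset.mem_Ico] at hj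
      simp only [Finset.mem_Icc]
      omega
    · intro t ht
      simp only [Finset.mem_Icc] at ht
      omega
    · intro j hj
      simp only [Finset.mem_Ico] at hj
      omega
    · intro t ht
      simp only [Finset.mem_Icc] at ht
      omega
  rw [h1, h2]
  have h3 : G (L - a) = ∑ j ∈ Finset.Ico 0 (L - a), j := by
    rw [G, Finset.range_eq_Ico]
  have h4 : G (L - 2*a) = ∑ j ∈ Finset.Ico 0 (L - 2*a), j := by
    rw [G, Finset.range_eq_Ico]
  rw [h3, h4, ← Finset.sum_Ico_consecutive (fun j => j) (by omega : 0 ≤ L - 2*a)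
    (by omega : L - 2*a ≤ L - a)]
  ring

lemma reA (L m : ℕ) (h : m ≤ L) :
    ∑ a ∈ Finset.Icc m L, G (L - a) = ∑ k ∈ Finset.range (L - m + 1), G k := by
  apply Finset.sum_nbij' (i := fun a => L - a) (j := fun k => L - k)
  · intro a ha; simp only [Finset.mem_Icc] at ha; simp only [Finset.mem_range]; omega
  · intro k hk; simp only [Finset.mem_range] at hk; simp only [Finset.mem_Icc]; omega
  · intro a ha; simp only [Finset.mem_Icc] at ha; omega
  · intro k hk; simp only [Finset.mem_range] at hk; omega
  · intro a _; rfl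

lemma reB (L m : ℕ) (h : m ≤ L) :
    ∑ a ∈ Finset.Icc m L, G (L - 2*a) = ∑ i ∈ Finset.range (L - m + 1), G (L - 2*m - 2*i) := by
  apply Finset.sum_nbij' (i := fun a => a - m) (j := fun i => m + i)
  · intro a ha; simp only [Finset.mem_Icc] at ha; simp only [Finset.mem_range]; omega
  · intro i hi; simp only [Finset.mem_range] at hi; simp only [Finset.mem_Icc]; omega
  · intro a ha; simp only [Finset.mem_Icc] at ha; omega
  · intro i hi; simp only [Finset.mem_range] at hi; omega
  · intro a ha
    simp only [Finset.mem_Icc] at ha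
    congr 1
    omega

lemma master (L m : ℕ) (h : m ≤ L) :
    (LambdaSet L m).card + (∑ i ∈ Finset.range (L - m + 1), G (L - 2*m - 2*i))
      = ∑ k ∈ Finset.range (L - m + 1), G k := by
  rw [cardLambda, ← reA L m h, ← reB L m h, ← Finset.sum_add_distrib]
  exact Finset.sum_congr rfl (fun a _ => innerSumG L a)

noncomputable def Fup (p : ℝ × ℝ) : ℝ :=
  (1 - p.1 + p.2) * (1 - p.1) * (1 - p.1 - p.2) / 6
    - (1 - 2*p.1 + p.2) * (1 - 2*p.1) * (1 - 2*p.1 - p.2) / 12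

noncomputable def Flo (p : ℝ × ℝ) : ℝ :=
  Fup p - (1 - 2*p.1 + p.2) * (1 - 2*p.1) * p.2 / 4

lemma Fup_cont : Continuous Fup := by unfold Fup; fun_prop

lemma Flo_cont : Continuous Flo := by unfold Flo Fup; fun_prop

end Stmt9Aux

open Stmt9Aux in
theorem stmt_9 (r : ℝ) (hr : r ∈ Set.Ioo (0 : ℝ) (1 / 2)) :
    Tendsto (fun L : ℕ => ((LambdaSet L ⌈r * L⌉₊).card : ℝ) / (L : ℝ) ^ 3)
      atTop (nhds (1 / 12 - r ^ 2 / 2 + r ^ 3 / 2)) := by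
  obtain ⟨hr0, hr2⟩ := hr
  have h1r : (0:ℝ) < 1 - 2*r := by linarith
  have hι : Tendsto (fun L : ℕ => 1/(L:ℝ)) atTop (nhds 0) :=
    tendsto_one_div_atTop_nhds_zero_nat
  have hμ : Tendsto (fun L : ℕ => (⌈r*L⌉₊ : ℝ)/L) atTop (nhds r) := by
    apply tendsto_of_tendsto_of_tendsto_of_le_of_le' (g := fun _ : ℕ => r)
      (h := fun L : ℕ => r + 1/(L:ℝ))
    · exact tendsto_const_nhds
    · simpa using (tendsto_const_nhds (x := r) (f := atTop)).add hι
    · filter_upwards [eventually_ge_atTop 1] with L hL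
      have hL0 : (0:ℝ) < L := by exact_mod_cast hL
      rw [le_div_iff₀ hL0]
      exact Nat.le_ceil _
    · filter_upwards [eventually_ge_atTop 1] with L hL
      have hL0 : (0:ℝ) < L := by exact_mod_cast hL
      rw [div_le_iff₀ hL0]
      have h1 := (Nat.ceil_lt_add_one (by positivity : (0:ℝ) ≤ r * L)).le
      have h2 : (r + 1/(L:ℝ)) * L = r * L + 1 := by field_simp
      linarith
  have hpair : Tendsto (fun L : ℕ => ((⌈r*L⌉₊ : ℝ)/L, 1/(L:ℝ))) atTop (nhds (r, 0)) :=
    hμ.prodMk_nhds hι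
  have hvalup : Fup (r, 0) = 1 / 12 - r ^ 2 / 2 + r ^ 3 / 2 := by
    unfold Fup; ring
  have hvallo : Flo (r, 0) = 1 / 12 - r ^ 2 / 2 + r ^ 3 / 2 := by
    unfold Flo; rw [hvalup]; ring
  have hup : Tendsto (fun L : ℕ => Fup ((⌈r*L⌉₊ : ℝ)/L, 1/(L:ℝ))) atTop
      (nhds (1 / 12 - r ^ 2 / 2 + r ^ 3 / 2)) := by
    rw [← hvalup]
    exact (Fup_cont.tendsto (r, 0)).comp hpair
  have hlo : Tendsto (fun L : ℕ => Flo ((⌈r*L⌉₊ : ℝ)/L, 1/(L:ℝ))) atTop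
      (nhds (1 / 12 - r ^ 2 / 2 + r ^ 3 / 2)) := by
    rw [← hvallo]
    exact (Flo_cont.tendsto (r, 0)).comp hpair
  -- eventual bound on L
  have hev : ∀ᶠ L : ℕ in atTop, 2*(r*(L:ℝ)+1) + 1 ≤ (L:ℝ) := by
    have ht : Tendsto (fun L : ℕ => (L:ℝ) * (1 - 2*r)) atTop atTop :=
      Tendsto.atTop_mul_const h1r tendsto_natCast_atTop_atTop
    filter_upwards [ht.eventually_ge_atTop 3] with L hL
    nlinarith
  have hmain : ∀ L : ℕ, 2*(r*(L:ℝ)+1) + 1 ≤ (L:ℝ) →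
      (Flo ((⌈r*(L:ℕ)⌉₊ : ℝ)/L, 1/(L:ℝ)) ≤ ((LambdaSet L ⌈r*(L:ℕ)⌉₊).card : ℝ) / (L:ℝ)^3 ∧
       ((LambdaSet L ⌈r*(L:ℕ)⌉₊).card : ℝ) / (L:ℝ)^3 ≤ Fup ((⌈r*(L:ℕ)⌉₊ : ℝ)/L, 1/(L:ℝ))) := by
    intro L hL
    set m := ⌈r*(L:ℕ)⌉₊ with hmdef
    have hmr : (m:ℝ) < r*L + 1 := Nat.ceil_lt_add_one (by positivity)
    have hcast : (2*(m:ℝ) + 1 : ℝ) ≤ L := by push_cast; linarith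
    have hm : 2*m + 1 ≤ L := by exact_mod_cast hcast
    have hml : m ≤ L := by omega
    have hL1 : 1 ≤ L := by omega
    have hx : (0:ℝ) < (L:ℝ) := by exact_mod_cast hL1
    have hmaster : (LambdaSet L m).card
        + (∑ i ∈ Finset.range (L - m + 1), G (L - 2*m - 2*i))
        = ∑ k ∈ Finset.range (L - m + 1), G k := master L m hml
    obtain ⟨hp1, hp2⟩ := pairing (L - 2*m) (L - m + 1) (by omega)
    have hnx : ((L - m + 1 : ℕ):ℝ) = (L:ℝ) - m + 1 := by
      push_cast [Nat.cast_sub hml]; ring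
    have hKx : ((L - 2*m : ℕ):ℝ) = (L:ℝ) - 2*m := by
      push_cast [Nat.cast_sub (by omega : 2*m ≤ L)]; ring
    have hA : ((∑ k ∈ Finset.range (L - m + 1), G k : ℕ) : ℝ)
        = ((L:ℝ) - m + 1) * ((L:ℝ) - m) * ((L:ℝ) - m - 1) / 6 := by
      rw [Nat.cast_sum, cube, hnx]; ring
    have hCr : ((∑ j ∈ Finset.range ((L - 2*m)+1), G j : ℕ) : ℝ)
        = ((L:ℝ) - 2*m + 1) * ((L:ℝ) - 2*m) * ((L:ℝ) - 2*m - 1) / 6 := by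
      rw [Nat.cast_sum, cube]; push_cast [hKx]; ring
    have hGK : ((G ((L - 2*m)+1) : ℕ) : ℝ) = ((L:ℝ) - 2*m + 1) * ((L:ℝ) - 2*m) / 2 := by
      rw [Greal]; push_cast [hKx]; ring
    have hmaster' : ((LambdaSet L m).card : ℝ)
        + ((∑ i ∈ Finset.range (L - m + 1), G (L - 2*m - 2*i) : ℕ) : ℝ)
        = ((∑ k ∈ Finset.range (L - m + 1), G k : ℕ) : ℝ) := by
      exact_mod_cast hmaster
    have hB2 : (∑ i ∈ Finset.range (L - m + 1), G ((L - 2*m) - 2*i))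
        = (∑ i ∈ Finset.range (L - m + 1), G (L - 2*m - 2*i)) := rfl
    rw [hB2] at hp1 hp2
    have hp1' : ((∑ j ∈ Finset.range ((L - 2*m)+1), G j : ℕ) : ℝ)
        ≤ 2 * ((∑ i ∈ Finset.range (L - m + 1), G (L - 2*m - 2*i) : ℕ) : ℝ) := by
      exact_mod_cast hp1
    have hp2' : 2 * ((∑ i ∈ Finset.range (L - m + 1), G (L - 2*m - 2*i) : ℕ) : ℝ)
        ≤ ((∑ j ∈ Finset.range ((L - 2*m)+1), G j : ℕ) : ℝ) + ((G ((L - 2*m)+1) : ℕ) : ℝ) := by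
      exact_mod_cast hp2
    have hupkey : Fup ((m:ℝ)/L, 1/(L:ℝ)) * (L:ℝ)^3
        = ((L:ℝ) - m + 1) * ((L:ℝ) - m) * ((L:ℝ) - m - 1) / 6
          - ((L:ℝ) - 2*m + 1) * ((L:ℝ) - 2*m) * ((L:ℝ) - 2*m - 1) / 12 := by
      unfold Fup
      field_simp
    have hlokey : Flo ((m:ℝ)/L, 1/(L:ℝ)) * (L:ℝ)^3
        = ((L:ℝ) - m + 1) * ((L:ℝ) - m) * ((L:ℝ) - m - 1) / 6
          - ((L:ℝ) - 2*m + 1) * ((L:ℝ) - 2*m) * ((L:ℝ) - 2*m - 1) / 12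
          - ((L:ℝ) - 2*m + 1) * ((L:ℝ) - 2*m) / 4 := by
      unfold Flo Fup
      field_simp
    constructor
    · rw [le_div_iff₀ (by positivity), hlokey]
      linarith
    · rw [div_le_iff₀ (by positivity), hupkey]
      linarith
  apply tendsto_of_tendsto_of_tendsto_of_le_of_le' hlo hup
  · filter_upwards [hev] with L hL
    exact (hmain L hL).1
  · filter_upwards [hev] with L hL
    exact (hmain L hL).2
end

section
/- Let (ℓ₁(n), ℓ₂(n), ℓ₃(n)) be sequences of nonnegative integers such that for every n the sum ℓ₁(n)+ℓ₂(n)+ℓ₃(n) = 2s(n) is even and the triangle inequalities hold, and such that min(ℓ₁+ℓ₂−ℓ₃, ℓ₁−ℓ₂+ℓ₃, −ℓ₁+ℓ₂+ℓ₃) → ∞ as n → ∞. Then lim_{n→∞} √(π/2) · Δ(ℓ₁(n),ℓ₂(n),ℓ₃(n))^{1/4} · s(n)! / ((s(n)−ℓ₁(n))! (s(n)−ℓ₂(n))! (s(n)−ℓ₃(n))!) · √( (ℓ₁+ℓ₂−ℓ₃)! (ℓ₁−ℓ₂+ℓ₃)! (−ℓ₁+ℓ₂+ℓ₃)! / (ℓ₁+ℓ₂+ℓ₃+1)!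 ) = 1. Equivalently, the Wigner 3j-symbol with zero magnetic indices satisfies W(ℓ₁,ℓ₂,ℓ₃) ≈ (−1)^{(ℓ₁+ℓ₂+ℓ₃)/2} √(2/π) Δ(ℓ₁,ℓ₂,ℓ₃)^{−1/4} in this regime. -/
/-!
With `a = s - ℓ₁`, `b = s - ℓ₂`, `c = s - ℓ₃` one has `Δ = 16 a b c s`, and the fourth power of
the normalized 3j-symbol becomes exactly
`g a · g b · g c / g s · (2s / (2s + 1))²` with `g m = C(2m, m)² · π m / 16^m`.
By Wallis' product `C(2m, m) ~ 4^m / √(π m)`, i.e. `g m → 1`, and `a, b, c, s → ∞`.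
-/

open Filter Real

open Nat Topology

lemma tendsto_atTop_of_le_two_mul {ι : Type*} {l : Filter ι} {f g : ι → ℕ}
    (hf : Tendsto f l atTop) (h : ∀ i, f i ≤ 2 * g i) : Tendsto g l atTop :=
  tendsto_atTop_mono (fun i ↦ show f i / 2 ≤ g i by have := h i; omega)
    ((Nat.tendsto_div_const_atTop two_ne_zero).comp hf)

noncomputable def centralBinomSqNormalized (m : ℕ) : ℝ :=
  (centralBinom m : ℝ) ^ 2 * (π * m) / 16 ^ m

lemma centralBinom_mul_factorial_sq (m : ℕ) :
    (centralBinom m : ℝ) * (m ! : ℝ) ^ 2 = (2 * m)! := by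
  rw [centralBinom_eq_two_mul_choose, ← choose_mul_factorial_mul_factorial (by omega : m ≤ 2 * m),
    show 2 * m - m = m by omega]
  push_cast
  ring

lemma centralBinomSqNormalized_eq (m : ℕ) :
    centralBinomSqNormalized m = π * m / ((2 * m + 1) * Wallis.W m) := by
  have hC : (centralBinom m : ℝ) ≠ 0 := by exact_mod_cast centralBinom_ne_zero m
  have hF : (m ! : ℝ) ≠ 0 := by exact_mod_cast m.factorial_ne_zero
  rw [centralBinomSqNormalized, Wallis.W_eq_factorial_ratio, ← centralBinom_mul_factorial_sq,
    pow_mul]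
  field_simp
  norm_num

lemma tendsto_centralBinomSqNormalized :
    Tendsto centralBinomSqNormalized atTop (𝓝 1) := by
  have h := (Stirling.tendsto_self_div_two_mul_self_add_one.const_mul π).div
    Wallis.tendsto_W_nhds_pi_div_two (by positivity)
  rw [mul_one_div, div_self (by positivity)] at h
  refine h.congr fun m ↦ ?_
  rw [centralBinomSqNormalized_eq, Pi.div_apply, mul_div_assoc]
  field_simp

/-- The fourth power of the normalized 3j-symbol, in the variables `a = s - ℓ₁`, `b = s - ℓ₂`,
`c = s - ℓ₃` (so that `ℓ₁ = b + c`, `ℓ₂ = a + c`, `ℓ₃ = a + b`, `s = a + b + c`). -/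
noncomputable def threeJFourthPower (a b c : ℕ) : ℝ :=
  centralBinomSqNormalized a * centralBinomSqNormalized b * centralBinomSqNormalized c /
    centralBinomSqNormalized (a + b + c) * (2 * (a + b + c : ℕ) / (2 * (a + b + c : ℕ) + 1)) ^ 2

lemma Delta_add_add (a b c : ℝ) :
    Delta (b + c) (a + c) (a + b) = 16 * (a * b * c * (a + b + c)) := by
  unfold Delta
  ring

lemma threeJ_pow_four (a b c : ℕ) (h : a + b + c ≠ 0) :
    (√(π / 2) * Delta ((b + c : ℕ) : ℝ) ((a + c : ℕ) : ℝ) ((a + b : ℕ) : ℝ) ^ ((1 : ℝ) / 4) *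
        ((a + b + c)! : ℝ) / ((a ! : ℝ) * b ! * c !) *
        √(((2 * c)! : ℝ) * (2 * b)! * (2 * a)! / (2 * (a + b + c) + 1)!)) ^ 4 =
      threeJFourthPower a b c := by
  have sqrt_pow_four : ∀ x : ℝ, 0 ≤ x → √x ^ 4 = x ^ 2 := fun x hx ↦ by
    rw [show 4 = 2 * 2 from rfl, pow_mul, sq_sqrt hx]
  have rpow_quarter_pow_four : ∀ x : ℝ, 0 ≤ x → (x ^ ((1 : ℝ) / 4)) ^ 4 = x := fun x hx ↦ by
    rw [← rpow_natCast, ← rpow_mul hx]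
    norm_num
  push_cast
  rw [Delta_add_add, mul_pow, div_pow, mul_pow, mul_pow, sqrt_pow_four _ (by positivity),
    sqrt_pow_four _ (by positivity), rpow_quarter_pow_four _ (by positivity)]
  unfold threeJFourthPower centralBinomSqNormalized
  rw [← centralBinom_mul_factorial_sq, ← centralBinom_mul_factorial_sq,
    ← centralBinom_mul_factorial_sq, factorial_succ, cast_mul, ← centralBinom_mul_factorial_sq]
  have hs : (0 : ℝ) < a + b + c := by exact_mod_cast Nat.pos_of_ne_zero h
  have hC : (centralBinom (a + b + c) : ℝ) ≠ 0 := by exact_mod_cast centralBinom_ne_zero _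
  push_cast
  rw [pow_add, pow_add]
  field_simp
  ring

lemma threeJ_eq_rpow (l₁ l₂ l₃ s : ℕ) (heven : l₁ + l₂ + l₃ = 2 * s)
    (htri : l₃ ≤ l₁ + l₂ ∧ l₂ ≤ l₁ + l₃ ∧ l₁ ≤ l₂ + l₃) (hs : s ≠ 0) :
    √(π / 2) * Delta l₁ l₂ l₃ ^ ((1 : ℝ) / 4) * (s ! : ℝ) /
        ((s - l₁)! * (s - l₂)! * (s - l₃)! : ℝ) *
        √(((l₁ + l₂ - l₃)! * (l₁ + l₃ - l₂)! * (l₂ + l₃ - l₁)! : ℝ) / (l₁ + l₂ + l₃ + 1)!) =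
      threeJFourthPower (s - l₁) (s - l₂) (s - l₃) ^ ((1 : ℝ) / 4) := by
  obtain ⟨a, b, c, rfl, rfl, rfl, rfl⟩ :
      ∃ a b c, l₁ = b + c ∧ l₂ = a + c ∧ l₃ = a + b ∧ s = a + b + c :=
    ⟨s - l₁, s - l₂, s - l₃, by omega, by omega, by omega, by omega⟩
  rw [show a + b + c - (b + c) = a by omega, show a + b + c - (a + c) = b by omega,
    show a + b + c - (a + b) = c by omega, show b + c + (a + c) - (a + b) = 2 * c by omega,
    show b + c + (a + b) - (a + c) = 2 * b by omega, show a + c + (a + b) - (b + c) = 2 * a by omega,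
    show b + c + (a + c) + (a + b) + 1 = 2 * (a + b + c) + 1 by omega,
    ← threeJ_pow_four a b c hs, show (1 : ℝ) / 4 = ((4 : ℕ) : ℝ)⁻¹ by norm_num,
    pow_rpow_inv_natCast _ four_ne_zero]
  push_cast
  rw [Delta_add_add]
  positivity

lemma tendsto_threeJFourthPower {ι : Type*} {l : Filter ι} {a b c : ι → ℕ}
    (ha : Tendsto a l atTop) (hb : Tendsto b l atTop) (hc : Tendsto c l atTop) :
    Tendsto (fun i ↦ threeJFourthPower (a i) (b i) (c i)) l (𝓝 1) := by
  have hs : Tendsto (fun i ↦ a i + b i + c i) l atTop :=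
    tendsto_atTop_mono (fun i ↦ by omega) ha
  have hfrac : Tendsto (fun m : ℕ ↦ 2 * (m : ℝ) / (2 * m + 1)) atTop (𝓝 1) := by
    have h := Stirling.tendsto_self_div_two_mul_self_add_one.const_mul 2
    rw [mul_one_div_cancel two_ne_zero] at h
    simpa only [mul_div_assoc] using h
  have g := tendsto_centralBinomSqNormalized
  simpa [threeJFourthPower] using
    ((((g.comp ha).mul (g.comp hb)).mul (g.comp hc)).div (g.comp hs) one_ne_zero).mul
      ((hfrac.comp hs).pow 2)

theorem stmt_10 (l₁ l₂ l₃ s : ℕ → ℕ)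
    (heven : ∀ n, l₁ n + l₂ n + l₃ n = 2 * s n)
    (htri : ∀ n, l₃ n ≤ l₁ n + l₂ n ∧ l₂ n ≤ l₁ n + l₃ n ∧ l₁ n ≤ l₂ n + l₃ n)
    (hmin : Tendsto (fun n => min (l₁ n + l₂ n - l₃ n)
      (min (l₁ n + l₃ n - l₂ n) (l₂ n + l₃ n - l₁ n))) atTop atTop) :
    Tendsto (fun n =>
      Real.sqrt (π / 2) * Delta (l₁ n) (l₂ n) (l₃ n) ^ ((1 : ℝ) / 4) *
        ((s n).factorial : ℝ) /
        (((s n - l₁ n).factorial : ℝ) * ((s n - l₂ n).factorial : ℝ) *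
          ((s n - l₃ n).factorial : ℝ)) *
        Real.sqrt ((((l₁ n + l₂ n - l₃ n).factorial : ℝ) *
          ((l₁ n + l₃ n - l₂ n).factorial : ℝ) * ((l₂ n + l₃ n - l₁ n).factorial : ℝ)) /
          ((l₁ n + l₂ n + l₃ n + 1).factorial : ℝ)))
      atTop (nhds 1) := by
  have ha := tendsto_atTop_of_le_two_mul hmin fun n ↦
    show _ ≤ 2 * (s n - l₁ n) by have := heven n; have := htri n; omega
  have hb := tendsto_atTop_of_le_two_mul hmin fun n ↦
    show _ ≤ 2 * (s n - l₂ n) by have := heven n; have := htri n; omega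
  have hc := tendsto_atTop_of_le_two_mul hmin fun n ↦
    show _ ≤ 2 * (s n - l₃ n) by have := heven n; have := htri n; omega
  have hlim := (tendsto_threeJFourthPower ha hb hc).rpow_const (p := 1 / 4) (Or.inr (by norm_num))
  rw [one_rpow] at hlim
  refine hlim.congr' ?_
  filter_upwards [ha.eventually_ne_atTop 0] with n hn
  exact (threeJ_eq_rpow _ _ _ _ (heven n) (htri n) (by omega)).symm
end

section
/- For every α > 4 and r ∈ (0,1/2), the integral D_r(1−α, 1−α, 1+α, 1/2) = ∫_{A_r} x₁^{1−α} x₂^{1−α} x₃^{1+α} Δ(x₁,x₂,x₃)^{−1/2} dx₁ dx₂ dx₃ is finite. -/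
open MeasureTheory

/-! On `A_r` the factors `x₁^{1-α}`, `x₂^{1-α}`, `x₃^{1+α}` are bounded, and
`Δ = (x₁ + x₂ - x₃) · Q` with `Q ≥ 3r³`, so the integrand is at most a constant times
`(x₁ + x₂ - x₃)^{-1/2}`. Integrating first in `x₃`, this is a translate of `t^{-1/2}`, which is
integrable on bounded intervals, uniformly in `x₁, x₂`. -/

open Set
open scoped ENNReal

section Tonelli

variable {α β : Type*} [MeasurableSpace α] [MeasurableSpace β] {μ : Measure α} {ν : Measure β}
  [SFinite μ] [SFinite ν]

lemma setLIntegral_prod_le_mul {s : Set α} {t : Set β} {f : α × β → ℝ≥0∞} {C : ℝ≥0∞}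
    (hs : MeasurableSet s) (hC : ∀ x ∈ s, ∫⁻ y in t, f (x, y) ∂ν ≤ C) :
    ∫⁻ p in s ×ˢ t, f p ∂μ.prod ν ≤ C * μ s := by
  rw [← Measure.prod_restrict]
  calc ∫⁻ p, f p ∂(μ.restrict s).prod (ν.restrict t)
      ≤ ∫⁻ x in s, ∫⁻ y in t, f (x, y) ∂ν ∂μ := lintegral_prod_le f
    _ ≤ ∫⁻ _ in s, C ∂μ := setLIntegral_mono' hs hC
    _ = C * μ s := setLIntegral_const s C

end Tonelli

lemma setLIntegral_Icc_comp_const_sub (f : ℝ → ℝ≥0∞) (c a b : ℝ) :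
    ∫⁻ z in Icc a b, f (c - z) = ∫⁻ t in Icc (c - b) (c - a), f t := by
  rw [← image_const_sub_Icc]
  exact (Measure.measurePreserving_sub_left volume c).setLIntegral_comp_emb
    (measurableEmbedding_subLeft c) f _

-- For `t < 0`, `t ^ s` is `Real.rpow`'s value `|t| ^ s * cos (s * π)`, integrable as well.
lemma setLIntegral_Icc_rpow_lt_top {s : ℝ} (hs : -1 < s) (a b : ℝ) :
    ∫⁻ t in Icc a b, ENNReal.ofReal (t ^ s) < ⊤ :=
  (((intervalIntegrable_iff').mp (intervalIntegral.intervalIntegrable_rpow' hs)).mono_set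
    Icc_subset_uIcc).lintegral_lt_top

lemma setLIntegral_Icc_prod_rpow_add_sub_lt_top {s : ℝ} (hs : -1 < s) (a₁ b₁ a₂ b₂ a₃ b₃ : ℝ) :
    ∫⁻ p in Icc a₁ b₁ ×ˢ Icc a₂ b₂ ×ˢ Icc a₃ b₃,
      ENNReal.ofReal ((p.1 + p.2.1 - p.2.2) ^ s) < ⊤ := by
  set M := ∫⁻ t in Icc (a₁ + a₂ - b₃) (b₁ + b₂ - a₃), ENNReal.ofReal (t ^ s)
  have inner : ∀ x ∈ Icc a₁ b₁, ∀ y ∈ Icc a₂ b₂,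
      ∫⁻ z in Icc a₃ b₃, ENNReal.ofReal ((x + y - z) ^ s) ≤ M := by
    intro x hx y hy
    rw [setLIntegral_Icc_comp_const_sub (fun t => ENNReal.ofReal (t ^ s))]
    exact lintegral_mono_set
      (Icc_subset_Icc (by linarith [hx.1, hy.1]) (by linarith [hx.2, hy.2]))
  have hbound : ∫⁻ p in Icc a₁ b₁ ×ˢ Icc a₂ b₂ ×ˢ Icc a₃ b₃,
      ENNReal.ofReal ((p.1 + p.2.1 - p.2.2) ^ s) ≤ M * volume (Icc a₂ b₂) * volume (Icc a₁ b₁) := by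
    rw [Measure.volume_eq_prod]
    refine setLIntegral_prod_le_mul measurableSet_Icc fun x hx => ?_
    rw [Measure.volume_eq_prod]
    exact setLIntegral_prod_le_mul measurableSet_Icc (inner x hx)
  refine hbound.trans_lt (ENNReal.mul_lt_top (ENNReal.mul_lt_top ?_ measure_Icc_lt_top)
    measure_Icc_lt_top)
  exact setLIntegral_Icc_rpow_lt_top hs _ _

lemma Delta_eq_mul (x y z : ℝ) :
    Delta x y z = (x + y - z) * ((x + y + z) * (x - y + z) * (-x + y + z)) := by
  unfold Delta; ring

lemma regionA_subset_Icc_prod (r : ℝ) : regionA r ⊆ Icc r 1 ×ˢ Icc r 1 ×ˢ Icc r 1 := by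
  rintro ⟨x, y, z⟩ ⟨hrx, hxy, hyz, hz1, -, -⟩
  exact ⟨⟨hrx, by linarith⟩, ⟨by linarith, by linarith⟩, ⟨by linarith, hz1⟩⟩

lemma integrand_le_of_mem_regionA {α r : ℝ} (hα : 1 ≤ α) (hr : 0 < r) {p : ℝ × ℝ × ℝ}
    (hp : p ∈ regionA r) :
    p.1 ^ (1 - α) * p.2.1 ^ (1 - α) * p.2.2 ^ (1 + α) * Delta p.1 p.2.1 p.2.2 ^ (-(1 / 2) : ℝ)
      ≤ r ^ (1 - α) * r ^ (1 - α) * (3 * r ^ 3) ^ (-(1 / 2) : ℝ) *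
          (p.1 + p.2.1 - p.2.2) ^ (-(1 / 2) : ℝ) := by
  obtain ⟨x, y, z⟩ := p
  obtain ⟨hrx, hxy, hyz, hz1, -, hzxy⟩ := hp
  dsimp only at *
  have hx0 : 0 < x := by linarith
  have hy0 : 0 < y := by linarith
  have hz0 : 0 < z := by linarith
  have hQ : 3 * r ^ 3 ≤ (x + y + z) * (x - y + z) * (-x + y + z) := by
    have h₁ : 3 * r ≤ x + y + z := by linarith
    have h₂ : r ≤ x - y + z := by linarith
    have h₃ : r ≤ -x + y + z := by linarith
    calc 3 * r ^ 3 = 3 * r * r * r := by ring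
      _ ≤ _ := mul_le_mul (mul_le_mul h₁ h₂ hr.le (by linarith)) h₃ hr.le
        (mul_nonneg (by linarith) (by linarith))
  rw [Delta_eq_mul]
  set Q := (x + y + z) * (x - y + z) * (-x + y + z)
  have hr3 : 0 < 3 * r ^ 3 := by positivity
  have hQ0 : 0 < Q := hr3.trans_le hQ
  have hx : x ^ (1 - α) ≤ r ^ (1 - α) := Real.rpow_le_rpow_of_nonpos hr hrx (by linarith)
  have hy : y ^ (1 - α) ≤ r ^ (1 - α) :=
    Real.rpow_le_rpow_of_nonpos hr (by linarith) (by linarith)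
  have hz : z ^ (1 + α) ≤ 1 := Real.rpow_le_one hz0.le hz1 (by linarith)
  have hQ_rpow : Q ^ (-(1 / 2) : ℝ) ≤ (3 * r ^ 3) ^ (-(1 / 2) : ℝ) :=
    Real.rpow_le_rpow_of_nonpos hr3 hQ (by norm_num)
  calc x ^ (1 - α) * y ^ (1 - α) * z ^ (1 + α) * ((x + y - z) * Q) ^ (-(1 / 2) : ℝ)
      = x ^ (1 - α) * y ^ (1 - α) * z ^ (1 + α) * Q ^ (-(1 / 2) : ℝ) *
          (x + y - z) ^ (-(1 / 2) : ℝ) := by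
        rw [Real.mul_rpow (by linarith) hQ0.le]; ring
    _ ≤ r ^ (1 - α) * r ^ (1 - α) * 1 * (3 * r ^ 3) ^ (-(1 / 2) : ℝ) *
          (x + y - z) ^ (-(1 / 2) : ℝ) := by gcongr
    _ = _ := by ring

theorem stmt_14 (α r : ℝ) (hα : 4 < α) (hr : r ∈ Set.Ioo (0 : ℝ) (1 / 2)) :
    ∫⁻ p in regionA r,
      ENNReal.ofReal (p.1 ^ (1 - α) * p.2.1 ^ (1 - α) * p.2.2 ^ (1 + α) *
        Delta p.1 p.2.1 p.2.2 ^ (-(1 / 2) : ℝ)) < ⊤ := by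
  have hr0 := hr.1
  set K := r ^ (1 - α) * r ^ (1 - α) * (3 * r ^ 3) ^ (-(1 / 2) : ℝ)
  calc ∫⁻ p in regionA r, ENNReal.ofReal (p.1 ^ (1 - α) * p.2.1 ^ (1 - α) * p.2.2 ^ (1 + α) *
        Delta p.1 p.2.1 p.2.2 ^ (-(1 / 2) : ℝ))
      ≤ ∫⁻ p in regionA r,
          ENNReal.ofReal K * ENNReal.ofReal ((p.1 + p.2.1 - p.2.2) ^ (-(1 / 2) : ℝ)) :=
        setLIntegral_mono (by fun_prop) fun p hp => by
          rw [← ENNReal.ofReal_mul (by positivity)]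
          exact ENNReal.ofReal_le_ofReal (integrand_le_of_mem_regionA (by linarith) hr0 hp)
    _ ≤ ∫⁻ p in Icc r 1 ×ˢ Icc r 1 ×ˢ Icc r 1,
          ENNReal.ofReal K * ENNReal.ofReal ((p.1 + p.2.1 - p.2.2) ^ (-(1 / 2) : ℝ)) :=
        lintegral_mono_set (regionA_subset_Icc_prod r)
    _ = ENNReal.ofReal K * ∫⁻ p in Icc r 1 ×ˢ Icc r 1 ×ˢ Icc r 1,
          ENNReal.ofReal ((p.1 + p.2.1 - p.2.2) ^ (-(1 / 2) : ℝ)) :=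
        lintegral_const_mul' _ _ ENNReal.ofReal_ne_top
    _ < ⊤ := ENNReal.mul_lt_top ENNReal.ofReal_lt_top
        (setLIntegral_Icc_prod_rpow_add_sub_lt_top (by norm_num) _ _ _ _ _ _)
end
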